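/- Let {b_j} satisfy b_0 = 1 and b_j ≥ 2 for j ≥ 1, and let A, B, z_k be as in the mixed-radix construction. If x ∈ B has the form x = ε_1 a_1 + ε_3 a_3 + ε_5 a_5 + ⋯ + ε_{2k−1} a_{2k−1} + ε_{2k+1} a_{2k+1} with 0 ≤ ε_{2j+1} ≤ b_{2j+2} − 1 and ε_{2k+1} ≥ 1, then A(x)B(x)/x ≤ A(z_k)B(z_k)/z_k. -/

import Mathlib

open Filter

/-- The counting function of a set `A` of non-negative integers:
`countBelow A x = #{a ∈ A : a ≤ x}`. -/
noncomputable def countBelow (A : Set ℕ) (x : ℕ) : ℕ := (A ∩ Set.Iic x).ncard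

/-- `aSeq b j = Π_{i=0}^{j} b_i`. -/
def aSeq (b : ℕ → ℕ) (j : ℕ) : ℕ := ∏ i ∈ Finset.range (j + 1), b i

/-- The set of non-negative integers using only even-indexed digits in the
mixed-radix system associated to `b`. -/
def mixA (b : ℕ → ℕ) : Set ℕ :=
  { m | ∃ N : ℕ, ∃ ε : ℕ → ℕ, (∀ j, ε j ≤ b (2 * j + 1) - 1) ∧
      m = ∑ j ∈ Finset.range N, ε j * aSeq b (2 * j) }

/-- The set of non-negative integers using only odd-indexed digits in the
mixed-radix system associated to `b`. -/
def mixB (b : ℕ → ℕ) : Set ℕ :=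
  { m | ∃ N : ℕ, ∃ ε : ℕ → ℕ, (∀ j, ε j ≤ b (2 * j + 2) - 1) ∧
      m = ∑ j ∈ Finset.range N, ε j * aSeq b (2 * j + 1) }

/-- `zk b k = (b_2-1)a_1 + (b_4-1)a_3 + ⋯ + (b_{2k}-1)a_{2k-1} + a_{2k+1}`. -/
def zk (b : ℕ → ℕ) (k : ℕ) : ℕ :=
  (∑ i ∈ Finset.range k, (b (2 * i + 2) - 1) * aSeq b (2 * i + 1)) + aSeq b (2 * k + 1)

/-!
Write `c j = b (2j+2)`, `w j = a (2j+1)` and `Q j = c 0 ⋯ c (j-1)`. The elements of `B` are the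
digit sums `∑ δ j * w j` with digits `δ j < c j`, and since each `w N` exceeds the largest digit sum
of the lower places, these sums are ordered lexicographically in their digits, exactly like the
mixed-radix numerals `∑ δ j * Q j`. Hence `B(x) = 1 + ∑ ε j * Q j`, and `B(z_k) = 2 Q k`.
Both `x` and `z_k` lie in `[a (2k+1), a (2k+2))`, which contains no element of `A`, so
`A(x) = A(z_k)`. The remaining inequality `B(x) z_k ≤ B(z_k) x` reduces to `2 Q k * w j ≤ Q j * w k`
for `j < k`, which holds because `w (j+1) ≥ 2 c j w j` (as `b (2j+3) ≥ 2`).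
-/

open Finset

namespace MixedRadix

def digitSum (δ u : ℕ → ℕ) (N : ℕ) : ℕ := ∑ j ∈ range N, δ j * u j

def SuperIncreasing (c u : ℕ → ℕ) : Prop := ∀ N, digitSum (fun j => c j - 1) u N < u N

def place (c : ℕ → ℕ) (j : ℕ) : ℕ := ∏ i ∈ range j, c i

def digit (c : ℕ → ℕ) (n j : ℕ) : ℕ := n / place c j % c j

def digitSums (c u : ℕ → ℕ) (N : ℕ) : Set ℕ :=
  {s | ∃ δ : ℕ → ℕ, (∀ j, δ j ≤ c j - 1) ∧ s = digitSum δ u N}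

variable {c u w δ ε : ℕ → ℕ} {N : ℕ}

@[simp] lemma digitSum_zero : digitSum δ u 0 = 0 := rfl

lemma digitSum_succ : digitSum δ u (N + 1) = digitSum δ u N + δ N * u N :=
  sum_range_succ _ _

lemma digitSum_mono (h : ∀ j < N, δ j ≤ ε j) : digitSum δ u N ≤ digitSum ε u N :=
  sum_le_sum fun j hj => Nat.mul_le_mul_right _ (h j (mem_range.mp hj))

lemma digitSum_add_digitSum_tsub (h : ∀ j < N, δ j ≤ ε j) :
    digitSum δ u N + digitSum (fun j => ε j - δ j) u N = digitSum ε u N := by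
  rw [digitSum, digitSum, digitSum, ← sum_add_distrib]
  refine sum_congr rfl fun j hj => ?_
  rw [← add_mul, Nat.add_sub_cancel' (h j (mem_range.mp hj))]

lemma digitSum_add_le_of_mul_le (hc : ∀ j, 1 ≤ c j) (hu : ∀ j, c j * u j ≤ u (j + 1)) (N : ℕ) :
    digitSum (fun j => c j - 1) u N + u 0 ≤ u N := by
  induction N with
  | zero => simp
  | succ N ih =>
    have := hu N
    have : (c N - 1) * u N + u N = c N * u N := by
      rw [← Nat.succ_mul, Nat.succ_eq_add_one, Nat.sub_add_cancel (hc N)]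
    rw [digitSum_succ]
    omega

lemma SuperIncreasing.of_mul_le (hc : ∀ j, 1 ≤ c j) (hu : ∀ j, c j * u j ≤ u (j + 1))
    (hu0 : 1 ≤ u 0) : SuperIncreasing c u :=
  fun N => by have := digitSum_add_le_of_mul_le hc hu N; omega

lemma place_succ (j : ℕ) : place c (j + 1) = place c j * c j := prod_range_succ _ _

lemma digitSum_place_add_one (hc : ∀ j, 1 ≤ c j) (N : ℕ) :
    digitSum (fun j => c j - 1) (place c) N + 1 = place c N := by
  induction N with
  | zero => rfl
  | succ N ih =>
    rw [digitSum_succ, place_succ, add_right_comm, ih, Nat.sub_mul, one_mul, mul_comm,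
      Nat.add_sub_cancel' (Nat.le_mul_of_pos_right _ (hc N))]

lemma superIncreasing_place (hc : ∀ j, 1 ≤ c j) : SuperIncreasing c (place c) :=
  fun N => by have := digitSum_place_add_one hc N; omega

namespace SuperIncreasing

lemma digitSum_lt (hu : SuperIncreasing c u) (hδ : ∀ j < N, δ j ≤ c j - 1) :
    digitSum δ u N < u N :=
  (digitSum_mono hδ).trans_lt (hu N)

lemma digitSum_succ_lt_mul (hu : SuperIncreasing c u) (hc : 1 ≤ c N)
    (hδ : ∀ j < N + 1, δ j ≤ c j - 1) : digitSum δ u (N + 1) < c N * u N := by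
  have hlow := hu.digitSum_lt (N := N) fun j hj => hδ j (by omega)
  have htop : δ N * u N + u N ≤ c N * u N := by
    rw [← Nat.succ_mul]; exact Nat.mul_le_mul_right _ (by have := hδ N (by omega); omega)
  rw [digitSum_succ]
  omega

lemma digitSum_succ_lt_iff (hu : SuperIncreasing c u) (hδ : ∀ j < N, δ j ≤ c j - 1)
    (hε : ∀ j < N, ε j ≤ c j - 1) :
    digitSum δ u (N + 1) < digitSum ε u (N + 1) ↔
      δ N < ε N ∨ δ N = ε N ∧ digitSum δ u N < digitSum ε u N := by
  have hδN := hu.digitSum_lt hδ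
  have hεN := hu.digitSum_lt hε
  rw [digitSum_succ, digitSum_succ]
  rcases lt_trichotomy (δ N) (ε N) with h | h | h
  · have : δ N * u N + u N ≤ ε N * u N := by rw [← Nat.succ_mul]; exact Nat.mul_le_mul_right _ h
    simp only [h, true_or, iff_true]
    omega
  · simp only [h, lt_irrefl, false_or, true_and]
    omega
  · have : ε N * u N + u N ≤ δ N * u N := by rw [← Nat.succ_mul]; exact Nat.mul_le_mul_right _ h
    simp only [h.not_gt, h.ne', false_and, or_self, iff_false, not_lt]
    omega

lemma digitSum_lt_digitSum_iff (hu : SuperIncreasing c u) (hw : SuperIncreasing c w)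
    (hδ : ∀ j < N, δ j ≤ c j - 1) (hε : ∀ j < N, ε j ≤ c j - 1) :
    digitSum δ u N < digitSum ε u N ↔ digitSum δ w N < digitSum ε w N := by
  induction N with
  | zero => simp
  | succ N ih =>
    have hδ' : ∀ j < N, δ j ≤ c j - 1 := fun j hj => hδ j (by omega)
    have hε' : ∀ j < N, ε j ≤ c j - 1 := fun j hj => hε j (by omega)
    rw [hu.digitSum_succ_lt_iff hδ' hε', hw.digitSum_succ_lt_iff hδ' hε', ih hδ' hε']

lemma digitSum_le_digitSum_iff (hu : SuperIncreasing c u) (hw : SuperIncreasing c w)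
    (hδ : ∀ j < N, δ j ≤ c j - 1) (hε : ∀ j < N, ε j ≤ c j - 1) :
    digitSum δ u N ≤ digitSum ε u N ↔ digitSum δ w N ≤ digitSum ε w N := by
  simpa only [not_lt] using (hu.digitSum_lt_digitSum_iff hw hε hδ).not

end SuperIncreasing

lemma digit_le (hc : ∀ j, 1 ≤ c j) (n j : ℕ) : digit c n j ≤ c j - 1 :=
  Nat.le_sub_one_of_lt (Nat.mod_lt _ (hc j))

lemma digitSum_digit_place (n N : ℕ) : digitSum (digit c n) (place c) N = n % place c N := by
  induction N with
  | zero => simp [place, Nat.mod_one]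
  | succ N ih => rw [digitSum_succ, ih, place_succ, Nat.mod_mul, digit, mul_comm (place c N)]

lemma digitSum_digit_place_of_lt {n : ℕ} (hn : n < place c N) :
    digitSum (digit c n) (place c) N = n := by
  rw [digitSum_digit_place, Nat.mod_eq_of_lt hn]

namespace SuperIncreasing

lemma strictMonoOn_digitSum_digit (hc : ∀ j, 1 ≤ c j) (hu : SuperIncreasing c u) :
    StrictMonoOn (fun n => digitSum (digit c n) u N) (Set.Iio (place c N)) := by
  intro m hm n hn hmn
  have hdig : ∀ n, ∀ j < N, digit c n j ≤ c j - 1 := fun n j _ => digit_le hc n j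
  rw [← (superIncreasing_place hc).digitSum_lt_digitSum_iff hu (hdig m) (hdig n),
    digitSum_digit_place_of_lt hm, digitSum_digit_place_of_lt hn]
  exact hmn

lemma digitSum_digit_eq (hc : ∀ j, 1 ≤ c j) (hu : SuperIncreasing c u)
    (hδ : ∀ j < N, δ j ≤ c j - 1) :
    digitSum (digit c (digitSum δ (place c) N)) u N = digitSum δ u N := by
  have hQ := superIncreasing_place hc
  have hdig : ∀ j < N, digit c (digitSum δ (place c) N) j ≤ c j - 1 :=
    fun j _ => digit_le hc _ j
  have hrep := digitSum_digit_place_of_lt (hQ.digitSum_lt hδ)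
  exact le_antisymm ((hQ.digitSum_le_digitSum_iff hu hdig hδ).mp hrep.le)
    ((hQ.digitSum_le_digitSum_iff hu hδ hdig).mp hrep.ge)

lemma ncard_digitSums_inter_Iic (hc : ∀ j, 1 ≤ c j) (hu : SuperIncreasing c u) {R : ℕ}
    (hR : R < place c N) :
    (digitSums c u N ∩ Set.Iic (digitSum (digit c R) u N)).ncard = R + 1 := by
  have hmono := hu.strictMonoOn_digitSum_digit hc (N := N)
  have hset : digitSums c u N ∩ Set.Iic (digitSum (digit c R) u N) =
      (fun n => digitSum (digit c n) u N) '' Set.Iic R := by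
    ext s
    constructor
    · rintro ⟨⟨δ, hδ, rfl⟩, hs⟩
      have hδN : ∀ j < N, δ j ≤ c j - 1 := fun j _ => hδ j
      have hn := (superIncreasing_place hc).digitSum_lt hδN
      refine ⟨_, ?_, hu.digitSum_digit_eq hc hδN⟩
      rw [Set.mem_Iic, ← hmono.le_iff_le hn hR, hu.digitSum_digit_eq hc hδN]
      exact hs
    · rintro ⟨n, hn, rfl⟩
      exact ⟨⟨digit c n, digit_le hc n, rfl⟩, (hmono.le_iff_le (hn.trans_lt hR) hR).mpr hn⟩
  rw [hset, ((hmono.mono fun n hn => hn.trans_lt hR).injOn).ncard_image, ← coe_Iic,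
    Set.ncard_coe_finset, Nat.card_Iic]

lemma lt_mul_of_mem_digitSums (hu : SuperIncreasing c u) {s K : ℕ} (hc : 1 ≤ c K)
    (hs : s ∈ digitSums c u (K + 1)) : s < c K * u K := by
  obtain ⟨δ, hδ, rfl⟩ := hs
  exact hu.digitSum_succ_lt_mul hc fun j _ => hδ j

end SuperIncreasing

lemma mem_digitSums_of_lt (hu : Monotone u) {s K : ℕ} (hs : s ∈ digitSums c u N) (hsK : s < u K) :
    s ∈ digitSums c u K := by
  obtain ⟨δ, hδ, rfl⟩ := hs
  set δ' := fun j => if j < N then δ j else 0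
  refine ⟨δ', fun j => ?_, ?_⟩
  · simp only [δ']
    split_ifs
    exacts [hδ j, Nat.zero_le _]
  have hhigh : ∀ j, K ≤ j → δ' j * u j = 0 := by
    intro j hKj
    simp only [δ']
    split_ifs with hjN
    · have hle : δ j * u j ≤ digitSum δ u N :=
        single_le_sum (f := fun j => δ j * u j) (fun _ _ => Nat.zero_le _) (mem_range.mpr hjN)
      have : δ j * u j < 1 * u j := by rw [one_mul]; exact (hle.trans_lt hsK).trans_le (hu hKj)
      rw [Nat.lt_one_iff.mp (Nat.lt_of_mul_lt_mul_right this), zero_mul]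
    · rw [zero_mul]
  calc digitSum δ u N = ∑ j ∈ range N, δ' j * u j :=
        sum_congr rfl fun j hj => by simp [δ', mem_range.mp hj]
    _ = ∑ j ∈ range (max N K), δ' j * u j :=
        sum_subset (range_subset_range.mpr (le_max_left _ _)) fun j _ hj => by
          simp [δ', mem_range.not.mp hj]
    _ = digitSum δ' u K :=
        (sum_subset (range_subset_range.mpr (le_max_right _ _)) fun j _ hj =>
          hhigh j (not_lt.mp (mem_range.not.mp hj))).symm

lemma two_mul_place_mul_le (hw : ∀ j, 2 * c j * w j ≤ w (j + 1)) {j k : ℕ} (hjk : j < k) :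
    2 * place c k * w j ≤ place c j * w k := by
  induction k with
  | zero => omega
  | succ k ih =>
    rw [place_succ]
    rcases Nat.lt_succ_iff_lt_or_eq.mp hjk with hj | rfl
    · calc 2 * (place c k * c k) * w j = 2 * place c k * w j * c k := by ring
        _ ≤ place c j * w k * c k := Nat.mul_le_mul_right _ (ih hj)
        _ ≤ place c j * w (k + 1) := by
          rw [mul_assoc]; exact Nat.mul_le_mul_left _ (by linarith [hw k])
    · calc 2 * (place c j * c j) * w j = place c j * (2 * c j * w j) := by ring
        _ ≤ place c j * w (j + 1) := Nat.mul_le_mul_left _ (hw j)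

def zDigits (c : ℕ → ℕ) (k : ℕ) (j : ℕ) : ℕ := if j < k then c j - 1 else 1

lemma zDigits_le (hc : ∀ j, 2 ≤ c j) (k j : ℕ) : zDigits c k j ≤ c j - 1 := by
  unfold zDigits
  split_ifs
  exacts [le_rfl, Nat.le_sub_one_of_lt (hc j)]

lemma digitSum_zDigits (k : ℕ) :
    digitSum (zDigits c k) u (k + 1) = digitSum (fun j => c j - 1) u k + u k := by
  rw [digitSum_succ, zDigits, if_neg (lt_irrefl k), one_mul]
  exact congrArg (· + u k) (sum_congr rfl fun j hj => by rw [zDigits, if_pos (mem_range.mp hj)])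

lemma digitSum_zDigits_place_add_one (hc : ∀ j, 1 ≤ c j) (k : ℕ) :
    digitSum (zDigits c k) (place c) (k + 1) + 1 = 2 * place c k := by
  rw [digitSum_zDigits, add_right_comm, digitSum_place_add_one hc, two_mul]

lemma digitSum_mul_le_zDigits (hc : ∀ j, 1 ≤ c j) (hw : ∀ j, 2 * c j * w j ≤ w (j + 1)) {k : ℕ}
    (hε : ∀ j < k, ε j ≤ c j - 1) (hεk : 1 ≤ ε k) :
    (digitSum ε (place c) (k + 1) + 1) * digitSum (zDigits c k) w (k + 1)
      ≤ (digitSum (zDigits c k) (place c) (k + 1) + 1) * digitSum ε w (k + 1) := by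
  set D := fun j => c j - 1 - ε j
  have hQ : digitSum ε (place c) k + digitSum D (place c) k + 1 = place c k := by
    rw [digitSum_add_digitSum_tsub hε, digitSum_place_add_one hc]
  have hT : digitSum ε w k + digitSum D w k = digitSum (fun j => c j - 1) w k :=
    digitSum_add_digitSum_tsub hε
  have hTW : digitSum (fun j => c j - 1) w k ≤ w k :=
    le_of_add_le_left (digitSum_add_le_of_mul_le hc (fun j => by linarith [hw j]) k)
  have hD : 2 * place c k * digitSum D w k ≤ digitSum D (place c) k * w k := by
    simp only [digitSum, mul_sum, sum_mul]
    refine sum_le_sum fun j hj => ?_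
    calc 2 * place c k * (D j * w j) = D j * (2 * place c k * w j) := by ring
      _ ≤ D j * (place c j * w k) :=
        Nat.mul_le_mul_left _ (two_mul_place_mul_le hw (mem_range.mp hj))
      _ = D j * place c j * w k := by ring
  rw [digitSum_zDigits, digitSum_zDigits_place_add_one hc, digitSum_succ, digitSum_succ]
  obtain ⟨f, hf⟩ : ∃ f, ε k = f + 1 := ⟨ε k - 1, by omega⟩
  rw [hf]
  -- With `Q = place c k`, `W = w k`, `T = digitSum (c - 1) w k`, the right side minus the left
  -- is `f Q (W - T) + (digitSum D Q k * W - 2 Q * digitSum D w k) + digitSum D Q k * T ≥ 0`.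
  rw [← hT] at hTW ⊢
  rw [← hQ] at hD ⊢
  nlinarith [Nat.mul_le_mul_left (f * (digitSum ε (place c) k + digitSum D (place c) k + 1)) hTW,
    Nat.zero_le (digitSum D (place c) k * (digitSum ε w k + digitSum D w k))]

end MixedRadix

open MixedRadix

lemma countBelow_eq_of_forall_notMem_Ico {S : Set ℕ} {lo hi x y : ℕ}
    (hS : ∀ s ∈ S, s ∉ Set.Ico lo hi) (hx : x ∈ Set.Ico lo hi) (hy : y ∈ Set.Ico lo hi) :
    countBelow S x = countBelow S y := by
  suffices h : ∀ x ∈ Set.Ico lo hi, S ∩ Set.Iic x = S ∩ Set.Iio lo by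
    rw [countBelow, countBelow, h x hx, h y hy]
  intro x hx
  ext s
  simp only [Set.mem_inter_iff, Set.mem_Iic, Set.mem_Iio, and_congr_right_iff]
  intro hs
  exact ⟨fun hsx => by_contra fun hlo => hS s hs ⟨not_lt.mp hlo, hsx.trans_lt hx.2⟩,
    fun hlo => hlo.le.trans hx.1⟩

section Construction

variable {b : ℕ → ℕ}

lemma aSeq_succ (j : ℕ) : aSeq b (j + 1) = aSeq b j * b (j + 1) :=
  prod_range_succ _ _

lemma aSeq_pos (hb1 : ∀ i, 1 ≤ b i) (j : ℕ) : 0 < aSeq b j :=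
  prod_pos fun i _ => hb1 i

lemma monotone_aSeq (hb1 : ∀ i, 1 ≤ b i) : Monotone (aSeq b) :=
  monotone_nat_of_le_succ fun j => by rw [aSeq_succ]; exact Nat.le_mul_of_pos_right _ (hb1 _)

lemma mixA_eq_iUnion :
    mixA b = ⋃ N, digitSums (fun j => b (2 * j + 1)) (fun j => aSeq b (2 * j)) N := by
  ext; simp [mixA, digitSums, digitSum]

lemma mixB_eq_iUnion :
    mixB b = ⋃ N, digitSums (fun j => b (2 * j + 2)) (fun j => aSeq b (2 * j + 1)) N := by
  ext; simp [mixB, digitSums, digitSum]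

lemma superIncreasing_aSeq (hb1 : ∀ i, 1 ≤ b i) (p : ℕ) :
    SuperIncreasing (fun j => b (2 * j + p + 1)) (fun j => aSeq b (2 * j + p)) :=
  .of_mul_le (fun _ => hb1 _)
    (fun j => by rw [mul_comm, ← aSeq_succ]; exact monotone_aSeq hb1 (by omega))
    (aSeq_pos hb1 _)

lemma two_mul_mul_aSeq_le (hb : ∀ j, 1 ≤ j → 2 ≤ b j) (j : ℕ) :
    2 * b (2 * j + 2) * aSeq b (2 * j + 1) ≤ aSeq b (2 * (j + 1) + 1) := by
  have h : aSeq b (2 * (j + 1) + 1) = aSeq b (2 * j + 1) * b (2 * j + 2) * b (2 * j + 3) := by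
    rw [show 2 * (j + 1) + 1 = 2 * j + 1 + 1 + 1 by ring, aSeq_succ, aSeq_succ]
  have := Nat.mul_le_mul_left (aSeq b (2 * j + 1) * b (2 * j + 2)) (hb (2 * j + 3) (by omega))
  linarith

lemma mixA_notMem_Ico (hb1 : ∀ i, 1 ≤ b i) {y : ℕ} (hy : y ∈ mixA b) (k : ℕ) :
    y ∉ Set.Ico (aSeq b (2 * k + 1)) (aSeq b (2 * k + 2)) := by
  rintro ⟨hlo, hhi⟩
  rw [mixA_eq_iUnion, Set.mem_iUnion] at hy
  obtain ⟨N, hy⟩ := hy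
  have hmono : Monotone fun j => aSeq b (2 * j) := fun i j h => monotone_aSeq hb1 (by omega)
  have := (superIncreasing_aSeq hb1 0).lt_mul_of_mem_digitSums (hb1 _)
    (mem_digitSums_of_lt (K := k + 1) hmono hy hhi)
  rw [mul_comm, ← aSeq_succ] at this
  exact this.not_ge hlo

lemma digitSum_mem_Ico (hb1 : ∀ i, 1 ≤ b i) {k : ℕ} {δ : ℕ → ℕ}
    (hδ : ∀ j < k + 1, δ j ≤ b (2 * j + 2) - 1) (hδk : 1 ≤ δ k) :
    digitSum δ (fun j => aSeq b (2 * j + 1)) (k + 1) ∈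
      Set.Ico (aSeq b (2 * k + 1)) (aSeq b (2 * k + 2)) := by
  constructor
  · rw [digitSum_succ]
    exact (Nat.le_mul_of_pos_left _ hδk).trans (Nat.le_add_left _ _)
  · have := (superIncreasing_aSeq hb1 1).digitSum_succ_lt_mul (hb1 _) hδ
    rwa [mul_comm, ← aSeq_succ] at this

lemma countBelow_mixB_digitSum (hb1 : ∀ i, 1 ≤ b i) {k : ℕ} {ε : ℕ → ℕ}
    (hε : ∀ j < k + 1, ε j ≤ b (2 * j + 2) - 1) :
    countBelow (mixB b) (digitSum ε (fun j => aSeq b (2 * j + 1)) (k + 1))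
      = digitSum ε (place fun j => b (2 * j + 2)) (k + 1) + 1 := by
  set c : ℕ → ℕ := fun j => b (2 * j + 2)
  set w : ℕ → ℕ := fun j => aSeq b (2 * j + 1)
  have hc : ∀ j, 1 ≤ c j := fun _ => hb1 _
  have hw : SuperIncreasing c w := superIncreasing_aSeq hb1 1
  have hmono : Monotone w := fun i j h => monotone_aSeq hb1 (by omega)
  have hset : mixB b ∩ Set.Iic (digitSum ε w (k + 1)) =
      digitSums c w (k + 1) ∩ Set.Iic (digitSum ε w (k + 1)) := by
    ext y
    rw [mixB_eq_iUnion]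
    simp only [Set.mem_inter_iff, Set.mem_iUnion, Set.mem_Iic]
    exact ⟨fun ⟨⟨N, hy⟩, hyx⟩ =>
        ⟨mem_digitSums_of_lt hmono hy (hyx.trans_lt (hw.digitSum_lt hε)), hyx⟩,
      fun ⟨hy, hyx⟩ => ⟨⟨k + 1, hy⟩, hyx⟩⟩
  rw [countBelow, hset, ← hw.digitSum_digit_eq hc hε,
    hw.ncard_digitSums_inter_Iic hc ((superIncreasing_place hc).digitSum_lt hε)]

end Construction

theorem stmt10_general (b : ℕ → ℕ) (hb0 : b 0 = 1) (hb : ∀ j, 1 ≤ j → 2 ≤ b j)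
    (k : ℕ) (ε : ℕ → ℕ)
    (hε : ∀ j, j ≤ k → ε j ≤ b (2 * j + 2) - 1) (hεk : 1 ≤ ε k)
    (x : ℕ) (hx : x = ∑ j ∈ Finset.range (k + 1), ε j * aSeq b (2 * j + 1)) :
    ((countBelow (mixA b) x : ℝ) * countBelow (mixB b) x) / x
      ≤ ((countBelow (mixA b) (zk b k) : ℝ) * countBelow (mixB b) (zk b k)) / (zk b k) := by
  have hb1 : ∀ i, 1 ≤ b i := fun i => by
    rcases Nat.eq_zero_or_pos i with rfl | hi
    exacts [hb0.ge, one_le_two.trans (hb i hi)]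
  set c : ℕ → ℕ := fun j => b (2 * j + 2)
  replace hx : x = digitSum ε (fun j => aSeq b (2 * j + 1)) (k + 1) := hx
  have hε' : ∀ j < k + 1, ε j ≤ c j - 1 := fun j hj => hε j (Nat.le_of_lt_succ hj)
  have hζ : ∀ j < k + 1, zDigits c k j ≤ c j - 1 :=
    fun j _ => zDigits_le (fun _ => hb _ (by omega)) k j
  have hz : zk b k = digitSum (zDigits c k) (fun j => aSeq b (2 * j + 1)) (k + 1) := by
    rw [digitSum_zDigits]; rfl
  have hxI := hx ▸ digitSum_mem_Ico hb1 hε' hεk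
  have hzI := hz ▸ digitSum_mem_Ico hb1 hζ (by simp [zDigits])
  have hA : countBelow (mixA b) x = countBelow (mixA b) (zk b k) :=
    countBelow_eq_of_forall_notMem_Ico (fun _ hy => mixA_notMem_Ico hb1 hy k) hxI hzI
  have hB : countBelow (mixB b) x * zk b k ≤ countBelow (mixB b) (zk b k) * x := by
    rw [hx, hz, countBelow_mixB_digitSum hb1 hε', countBelow_mixB_digitSum hb1 hζ]
    exact digitSum_mul_le_zDigits (fun _ => hb1 _) (two_mul_mul_aSeq_le hb)
      (fun j hj => hε' j (by omega)) hεk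
  have hx0 : (0 : ℝ) < x := by exact_mod_cast (aSeq_pos hb1 _).trans_le hxI.1
  have hz0 : (0 : ℝ) < zk b k := by exact_mod_cast (aSeq_pos hb1 _).trans_le hzI.1
  rw [hA, mul_div_assoc, mul_div_assoc]
  refine mul_le_mul_of_nonneg_left ?_ (Nat.cast_nonneg _)
  rw [div_le_div_iff₀ hx0 hz0]
  exact_mod_cast hB

theorem stmt10 (b : ℕ → ℕ) (hb0 : b 0 = 1) (hb : ∀ j, 1 ≤ j → 2 ≤ b j)
    (k : ℕ) (hk : 1 ≤ k) (ε : ℕ → ℕ)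
    (hε : ∀ j, j ≤ k → ε j ≤ b (2 * j + 2) - 1) (hεk : 1 ≤ ε k)
    (x : ℕ) (hx : x = ∑ j ∈ Finset.range (k + 1), ε j * aSeq b (2 * j + 1)) :
    ((countBelow (mixA b) x : ℝ) * countBelow (mixB b) x) / x
      ≤ ((countBelow (mixA b) (zk b k) : ℝ) * countBelow (mixB b) (zk b k)) / (zk b k) :=
  stmt10_general b hb0 hb k ε hε hεk x hx
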